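/- arXiv:2301.12250 — 2 statements merged into one kernel-verified Lean document; each statement's English description precedes it below -/
import Mathlib

section
/- Let λ₀ > 0, k ∈ ℕ with k ≤ m/(2e²λ₀), and let y, y' ∈ (ℝ^d)^m be datasets differing only in index i*. For ℓ = 0, ..., 2k, let S_ℓ be the largest e^{ℓ/k}λ₀-good subset of y and T_ℓ the largest e^{ℓ/k}λ₀-good subset of y'. Then for every 0 ≤ ℓ < 2k, S_ℓ \ {i*} ⊆ T_{ℓ+1}. -/
open Matrix BigOperators

/-- The (scaled) covariance `Σ_S = (1/m) ∑_{i ∈ S} y_i y_iᵀ`. -/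
noncomputable def covOf {d : ℕ} (m : ℕ) (y : Fin m → Fin d → ℝ) (S : Finset (Fin m)) :
    Matrix (Fin d) (Fin d) ℝ :=
  (m : ℝ)⁻¹ • ∑ i ∈ S, Matrix.vecMulVec (y i) (y i)

/-- `S` is a `λ`-good subset of `y`. -/
def IsGoodSubset {d m : ℕ} (y : Fin m → Fin d → ℝ) (lam : ℝ) (S : Finset (Fin m)) : Prop :=
  (covOf m y S).PosDef ∧ ∀ i ∈ S, y i ⬝ᵥ (covOf m y S)⁻¹ *ᵥ y i ≤ lam

/-- `S` is the largest λ-good subset of `y`: it contains every λ-good subset, and is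
itself λ-good (or is `∅` when no λ-good subset exists). -/
def IsLargestGoodSubset {d m : ℕ} (y : Fin m → Fin d → ℝ) (lam : ℝ)
    (S : Finset (Fin m)) : Prop :=
  (∀ T, IsGoodSubset y lam T → T ⊆ S) ∧ (IsGoodSubset y lam S ∨ S = ∅)


lemma herm_swap {n : ℕ} {A : Matrix (Fin n) (Fin n) ℝ} (hA : A.IsHermitian) (v w : Fin n → ℝ) :
    v ⬝ᵥ A *ᵥ w = w ⬝ᵥ A *ᵥ v := by
  have ht : Aᵀ = A := by rwa [Matrix.IsHermitian, conjTranspose] at hA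
  rw [dotProduct_mulVec, ← mulVec_transpose, ht, dotProduct_comm]

lemma quad_vecMulVec {n : ℕ} (a x : Fin n → ℝ) :
    x ⬝ᵥ (vecMulVec a a) *ᵥ x = (a ⬝ᵥ x) ^ 2 := by
  have : (vecMulVec a a) *ᵥ x = (a ⬝ᵥ x) • a := by
    ext j
    simp only [mulVec, vecMulVec_apply, dotProduct, Pi.smul_apply, smul_eq_mul,
      Finset.sum_mul, Finset.mul_sum]
    exact Finset.sum_congr rfl fun i _ => by ring
  rw [this, dotProduct_smul, dotProduct_comm, sq, smul_eq_mul]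

lemma sq_completion {n : ℕ} {A : Matrix (Fin n) (Fin n) ℝ} (hA : A.PosDef)
    (x z : Fin n → ℝ) : 2 * (x ⬝ᵥ z) - z ⬝ᵥ A *ᵥ z ≤ x ⬝ᵥ A⁻¹ *ᵥ x := by
  set w := z - A⁻¹ *ᵥ x with hw
  have h0 : 0 ≤ w ⬝ᵥ A *ᵥ w := by
    rcases eq_or_ne w 0 with h | h
    · simp [h]
    · exact le_of_lt (by simpa using hA.dotProduct_mulVec_pos h)
  have hAinv : A *ᵥ (A⁻¹ *ᵥ x) = x := by
    rw [mulVec_mulVec, Matrix.mul_nonsing_inv _ (isUnit_iff_isUnit_det _ |>.1 hA.isUnit),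
      one_mulVec]
  have hexp : w ⬝ᵥ A *ᵥ w
      = z ⬝ᵥ A *ᵥ z - 2 * (x ⬝ᵥ z) + x ⬝ᵥ A⁻¹ *ᵥ x := by
    have e1 : (A⁻¹ *ᵥ x) ⬝ᵥ A *ᵥ z = x ⬝ᵥ z := by
      rw [herm_swap hA.isHermitian, hAinv, dotProduct_comm]
    have e2 : z ⬝ᵥ A *ᵥ (A⁻¹ *ᵥ x) = x ⬝ᵥ z := by rw [hAinv, dotProduct_comm]
    have e3 : (A⁻¹ *ᵥ x) ⬝ᵥ A *ᵥ (A⁻¹ *ᵥ x) = x ⬝ᵥ A⁻¹ *ᵥ x := by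
      rw [hAinv, dotProduct_comm]
    rw [hw, mulVec_sub, sub_dotProduct, dotProduct_sub, dotProduct_sub, e1, e2, e3]
    ring
  linarith [hexp ▸ h0]

/-- inverse comparison of quadratic forms -/
lemma inv_quad_le {n : ℕ} {A B : Matrix (Fin n) (Fin n) ℝ} (hA : A.PosDef) (hB : B.PosDef)
    {c : ℝ} (hc : 0 < c) (h : ∀ z, c * (z ⬝ᵥ A *ᵥ z) ≤ z ⬝ᵥ B *ᵥ z) (x : Fin n → ℝ) :
    x ⬝ᵥ B⁻¹ *ᵥ x ≤ c⁻¹ * (x ⬝ᵥ A⁻¹ *ᵥ x) := by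
  set z := B⁻¹ *ᵥ x with hz
  have hBz : B *ᵥ z = x := by
    rw [hz, mulVec_mulVec, Matrix.mul_nonsing_inv _ (isUnit_iff_isUnit_det _ |>.1 hB.isUnit),
      one_mulVec]
  have h1 : x ⬝ᵥ B⁻¹ *ᵥ x = 2 * (x ⬝ᵥ z) - z ⬝ᵥ B *ᵥ z := by
    rw [hBz, dotProduct_comm z x]; ring
  have h2 := sq_completion hA x (c • z)
  have e1 : x ⬝ᵥ (c • z) = c * (x ⬝ᵥ z) := by rw [dotProduct_smul, smul_eq_mul]
  have e2 : (c • z) ⬝ᵥ A *ᵥ (c • z) = c ^ 2 * (z ⬝ᵥ A *ᵥ z) := by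
    rw [mulVec_smul, dotProduct_smul, smul_dotProduct]; simp [smul_eq_mul]; ring
  rw [e1, e2] at h2
  have h3 := h z
  rw [h1]
  have hcinv : (0:ℝ) < c⁻¹ := inv_pos.2 hc
  have key : c⁻¹ * (2 * (c * (x ⬝ᵥ z)) - c ^ 2 * (z ⬝ᵥ A *ᵥ z))
      = 2 * (x ⬝ᵥ z) - c * (z ⬝ᵥ A *ᵥ z) := by
    field_simp
  have h4 := mul_le_mul_of_nonneg_left h2 hcinv.le
  rw [key] at h4
  linarith

lemma cs_bound {n : ℕ} {A : Matrix (Fin n) (Fin n) ℝ} (hA : A.PosDef) {a : Fin n → ℝ}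
    {lam : ℝ} (hlam : 0 ≤ lam) (ha : a ⬝ᵥ A⁻¹ *ᵥ a ≤ lam) (x : Fin n → ℝ) :
    (a ⬝ᵥ x) ^ 2 ≤ lam * (x ⬝ᵥ A *ᵥ x) := by
  rcases eq_or_ne x 0 with rfl | hx
  · simp
  · have hq : 0 < x ⬝ᵥ A *ᵥ x := by simpa using hA.dotProduct_mulVec_pos hx
    set s := a ⬝ᵥ x with hs
    set q := x ⬝ᵥ A *ᵥ x with hq'
    have key : ∀ t : ℝ, 2 * t * s - t ^ 2 * q ≤ lam := by
      intro t
      have h2 := sq_completion hA a (t • x)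
      have e1 : a ⬝ᵥ (t • x) = t * s := by rw [dotProduct_smul, smul_eq_mul, hs]
      have e2 : (t • x) ⬝ᵥ A *ᵥ (t • x) = t ^ 2 * q := by
        rw [mulVec_smul, dotProduct_smul, smul_dotProduct]; simp [smul_eq_mul]; ring
      rw [e1, e2] at h2
      linarith
    have h3 := key (s / q)
    have : 2 * (s / q) * s - (s / q) ^ 2 * q = s ^ 2 / q := by field_simp; ring
    rw [this] at h3
    calc s ^ 2 = (s ^ 2 / q) * q := by field_simp
    _ ≤ lam * q := mul_le_mul_of_nonneg_right h3 hq.le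

lemma covOf_isHermitian {d m : ℕ} (y : Fin m → Fin d → ℝ) (S : Finset (Fin m)) :
    (covOf m y S).IsHermitian := by
  rw [Matrix.IsHermitian]
  ext i j
  simp only [covOf, conjTranspose_apply, Matrix.smul_apply, smul_eq_mul, star_trivial,
    Matrix.sum_apply]
  congr 1
  exact Finset.sum_congr rfl fun l _ => by rw [vecMulVec_apply, vecMulVec_apply, mul_comm]

lemma covOf_erase {d m : ℕ} (y : Fin m → Fin d → ℝ) (S : Finset (Fin m)) (i0 : Fin m)
    (hi0 : i0 ∈ S) :
    covOf m y S = covOf m y (S.erase i0) + (m : ℝ)⁻¹ • vecMulVec (y i0) (y i0) := by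
  rw [covOf, covOf, ← Finset.sum_erase_add S _ hi0, smul_add]

lemma good_erase {d m : ℕ} (y : Fin m → Fin d → ℝ) {lam : ℝ} (hlam : 0 < lam)
    (hm : lam ≤ m / 2) {S : Finset (Fin m)} (hS : IsGoodSubset y lam S)
    (i0 : Fin m) (hi0 : i0 ∈ S) :
    IsGoodSubset y (Real.exp (2 * lam / m) * lam) (S.erase i0) := by
  have hm0 : (0:ℝ) < m := by linarith
  set Sg1 := covOf m y S with hSg1
  set Sg2 := covOf m y (S.erase i0) with hSg2
  set a := y i0 with ha
  have hPD := hS.1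
  have hq := hS.2 i0 hi0
  have hsplit := covOf_erase y S i0 hi0
  have hquad : ∀ x : Fin d → ℝ, x ⬝ᵥ Sg2 *ᵥ x = x ⬝ᵥ Sg1 *ᵥ x - (m:ℝ)⁻¹ * (a ⬝ᵥ x) ^ 2 := by
    intro x
    have : x ⬝ᵥ Sg1 *ᵥ x = x ⬝ᵥ Sg2 *ᵥ x + (m:ℝ)⁻¹ * (a ⬝ᵥ x) ^ 2 := by
      rw [hSg1, hsplit, add_mulVec, dotProduct_add, smul_mulVec, dotProduct_smul,
        smul_eq_mul, quad_vecMulVec]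
    linarith
  set c : ℝ := 1 - lam / m with hc
  have hc2 : (1:ℝ)/2 ≤ c := by
    have : lam / m ≤ 1/2 := by rw [div_le_iff₀ hm0]; linarith
    rw [hc]; linarith
  have hcpos : 0 < c := lt_of_lt_of_le (by norm_num) hc2
  have hlb : ∀ x : Fin d → ℝ, c * (x ⬝ᵥ Sg1 *ᵥ x) ≤ x ⬝ᵥ Sg2 *ᵥ x := by
    intro x
    have hcs := cs_bound hPD hlam.le hq x
    rw [hquad x, hc]
    have h1 : (m:ℝ)⁻¹ * (a ⬝ᵥ x) ^ 2 ≤ (m:ℝ)⁻¹ * (lam * (x ⬝ᵥ Sg1 *ᵥ x)) :=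
      mul_le_mul_of_nonneg_left hcs (by positivity)
    have h2 : (m:ℝ)⁻¹ * (lam * (x ⬝ᵥ Sg1 *ᵥ x)) = lam / m * (x ⬝ᵥ Sg1 *ᵥ x) := by
      field_simp
    nlinarith
  have hPD2 : Sg2.PosDef := by
    refine Matrix.PosDef.of_dotProduct_mulVec_pos (covOf_isHermitian y _) fun x hx => ?_
    have h1 : 0 < x ⬝ᵥ Sg1 *ᵥ x := by simpa using hPD.dotProduct_mulVec_pos hx
    have := hlb x
    simp only [star_trivial]
    nlinarith
  refine ⟨hPD2, fun i hi => ?_⟩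
  have hb := inv_quad_le hPD hPD2 hcpos hlb (y i)
  have hqi := hS.2 i (Finset.mem_of_mem_erase hi)
  have hcinv : 0 < c⁻¹ := inv_pos.2 hcpos
  have hb2 : c⁻¹ * (y i ⬝ᵥ Sg1⁻¹ *ᵥ y i) ≤ c⁻¹ * lam :=
    mul_le_mul_of_nonneg_left hqi hcinv.le
  have hce : c⁻¹ ≤ Real.exp (2 * lam / m) := by
    set x := lam / m with hx
    have hx0 : 0 < x := by positivity
    have hx12 : x ≤ 1/2 := by rw [hx, div_le_div_iff₀ hm0 (by norm_num)]; linarith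
    have h1x : (0:ℝ) < 1 - x := by linarith
    have hi1 : c⁻¹ ≤ 1 + 2 * x := by
      rw [hc]
      nlinarith [mul_inv_cancel₀ h1x.ne', inv_pos.2 h1x, hx0, hx12, h1x]
    have := Real.add_one_le_exp (2 * x)
    have hexeq : 2 * lam / m = 2 * x := by rw [hx]; ring
    rw [hexeq]
    linarith
  calc y i ⬝ᵥ Sg2⁻¹ *ᵥ y i ≤ c⁻¹ * lam := le_trans hb hb2
  _ ≤ Real.exp (2 * lam / m) * lam := mul_le_mul_of_nonneg_right hce hlam.le

lemma covOf_congr {d m : ℕ} {y y' : Fin m → Fin d → ℝ} {S : Finset (Fin m)}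
    (h : ∀ i ∈ S, y i = y' i) : covOf m y S = covOf m y' S := by
  unfold covOf
  congr 1
  exact Finset.sum_congr rfl fun i hi => by rw [h i hi]

lemma good_congr {d m : ℕ} {y y' : Fin m → Fin d → ℝ} {lam : ℝ} {S : Finset (Fin m)}
    (h : ∀ i ∈ S, y i = y' i) (hS : IsGoodSubset y lam S) : IsGoodSubset y' lam S := by
  have hc := covOf_congr h
  refine ⟨hc ▸ hS.1, fun i hi => ?_⟩
  rw [← hc, ← h i hi]
  exact hS.2 i hi

lemma good_mono {d m : ℕ} {y : Fin m → Fin d → ℝ} {lam lam' : ℝ} {S : Finset (Fin m)}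
    (h : lam ≤ lam') (hS : IsGoodSubset y lam S) : IsGoodSubset y lam' S :=
  ⟨hS.1, fun i hi => le_trans (hS.2 i hi) h⟩

/-- Intertwining of largest good subsets on adjacent datasets:
`S_ℓ \ {i*} ⊆ T_{ℓ+1}`. -/
theorem largest_good_subsets_intertwined
    {d m : ℕ} (y y' : Fin m → Fin d → ℝ) (istar : Fin m)
    (hadj : ∀ i, i ≠ istar → y i = y' i)
    (lam0 : ℝ) (hlam0 : 0 < lam0)
    (k : ℕ) (hk0 : 0 < k) (hk : (k : ℝ) ≤ m / (2 * Real.exp 2 * lam0))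
    (S T : ℕ → Finset (Fin m))
    (hS : ∀ ℓ ≤ 2 * k, IsLargestGoodSubset y (Real.exp (ℓ / k : ℝ) * lam0) (S ℓ))
    (hT : ∀ ℓ ≤ 2 * k, IsLargestGoodSubset y' (Real.exp (ℓ / k : ℝ) * lam0) (T ℓ)) :
    ∀ ℓ < 2 * k, (S ℓ).erase istar ⊆ T (ℓ + 1) := by
  intro l hl
  have hm0 : (0:ℝ) < m := by exact_mod_cast istar.pos
  have hkpos : (0:ℝ) < k := by exact_mod_cast hk0
  have h1k : (1:ℝ) ≤ k := by exact_mod_cast hk0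
  have hTl := hT (l+1) (by omega)
  rcases (hS l (le_of_lt hl)).2 with hgood | hempty
  swap
  · simp [hempty]
  set lam := Real.exp ((l:ℝ)/k) * lam0 with hlamdef
  have hlampos : 0 < lam := mul_pos (Real.exp_pos _) hlam0
  have hlam_le : lam ≤ m / (2*k) := by
    have he2 : Real.exp ((l:ℝ)/k) ≤ Real.exp 2 := by
      apply Real.exp_le_exp.2
      rw [div_le_iff₀ hkpos]
      have : (l:ℝ) ≤ 2*k := by exact_mod_cast le_of_lt hl
      linarith
    have hd : 2 * Real.exp 2 * lam0 * k ≤ m := by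
      have hpos : (0:ℝ) < 2 * Real.exp 2 * lam0 := by positivity
      rw [le_div_iff₀ hpos] at hk
      linarith
    rw [le_div_iff₀ (by positivity)]
    calc lam * (2*k) = 2 * Real.exp ((l:ℝ)/k) * lam0 * k := by rw [hlamdef]; ring
    _ ≤ 2 * Real.exp 2 * lam0 * k := by
        have := mul_le_mul_of_nonneg_right (mul_le_mul_of_nonneg_right he2 hlam0.le) hkpos.le
        linarith
    _ ≤ m := hd
  have hlam_m2 : lam ≤ m / 2 := by
    refine le_trans hlam_le ?_
    rw [div_le_div_iff₀ (by positivity) (by norm_num)]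
    nlinarith
  have hcast : ((l+1 : ℕ) : ℝ)/k = (l:ℝ)/k + 1/k := by push_cast; ring
  have hmono : lam ≤ Real.exp (((l+1 : ℕ) : ℝ)/k) * lam0 := by
    rw [hlamdef]
    apply mul_le_mul_of_nonneg_right _ hlam0.le
    apply Real.exp_le_exp.2
    rw [hcast]
    have : (0:ℝ) ≤ 1/k := by positivity
    linarith
  by_cases hi : istar ∈ S l
  · have hrem := good_erase y hlampos hlam_m2 hgood istar hi
    have htrans : IsGoodSubset y' (Real.exp (2 * lam / m) * lam) ((S l).erase istar) :=
      good_congr (fun i hi' => hadj i (Finset.ne_of_mem_erase hi')) hrem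
    have hlevel : Real.exp (2 * lam / m) * lam ≤ Real.exp (((l+1 : ℕ) : ℝ)/k) * lam0 := by
      rw [hlamdef, ← mul_assoc, ← Real.exp_add, hcast]
      apply mul_le_mul_of_nonneg_right _ hlam0.le
      apply Real.exp_le_exp.2
      have h1 : 2 * lam / m ≤ 1 / k := by
        rw [div_le_div_iff₀ hm0 hkpos]
        rw [le_div_iff₀ (by positivity)] at hlam_le
        nlinarith
      linarith
    exact hTl.1 _ (good_mono hlevel htrans)
  · rw [Finset.erase_eq_of_notMem hi]
    have htrans : IsGoodSubset y' lam (S l) :=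
      good_congr (fun i hi' => hadj i (fun h => hi (h ▸ hi'))) hgood
    exact hTl.1 _ (good_mono hmono htrans)
end

section
/- Let ℓ₁ < ℓ₂ index two members of a nested family S_{ℓ₁} ⊆ S_{ℓ₂} ⊆ [m] of λ-good subsets of a dataset y (with λ = e²λ₀), such that |S_{ℓ₁}| ≥ m − k. Then the uniform weightings w₁, w₂ (value 1/m on S_{ℓ₁}, S_{ℓ₂} respectively, 0 elsewhere) satisfy ‖w₁ − w₂‖₁ ≤ k/m, and hence by the identifiability lemma, Σ_{S_{ℓ₁}} ⪰ (1 − γ)Σ_{S_{ℓ₂}} where γ = λ(k/m + 2/m) and Σ_S = (1/m)∑_{i∈S} y_i y_iᵀ, provided γ < 1. -/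
open Matrix BigOperators

lemma symm_dot {d : ℕ} {M : Matrix (Fin d) (Fin d) ℝ} (hM : Mᵀ = M) (a b : Fin d → ℝ) :
    a ⬝ᵥ M *ᵥ b = (M *ᵥ a) ⬝ᵥ b := by
  rw [dotProduct_mulVec, ← vecMul_transpose, hM]

open scoped MatrixOrder in
lemma outer_le {d : ℕ} {A : Matrix (Fin d) (Fin d) ℝ} (hA : A.PosDef) (v : Fin d → ℝ)
    {lam : ℝ} (h : v ⬝ᵥ A⁻¹ *ᵥ v ≤ lam) :
    (lam • A - Matrix.vecMulVec v v).PosSemidef := by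
  have hAinv : (A⁻¹).PosDef := hA.inv
  have hherm : Aᵀ = A := hA.isHermitian
  have hinvherm : (A⁻¹)ᵀ = A⁻¹ := hAinv.isHermitian
  set s := CFC.sqrt A with hs
  have hsherm : sᵀ = s := (CFC.sqrt_nonneg A).posSemidef.isHermitian
  have hss : s * s = A := CFC.sqrt_mul_sqrt_self A hA.posSemidef.nonneg
  have hAA : A⁻¹ * A = 1 := Matrix.nonsing_inv_mul A hA.det_pos.ne'.isUnit
  rw [Matrix.posSemidef_iff_dotProduct_mulVec]
  constructor
  · show ((lam • A - Matrix.vecMulVec v v)ᴴ = _)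
    ext i j
    simp [Matrix.conjTranspose_apply, Matrix.sub_apply, Matrix.smul_apply,
      Matrix.vecMulVec_apply]
    rw [show A j i = Aᵀ i j from rfl, hherm]
    ring
  · intro x
    have hstar : (star x : Fin d → ℝ) = x := by simp
    rw [hstar, Matrix.sub_mulVec, dotProduct_sub]
    have houter : x ⬝ᵥ (Matrix.vecMulVec v v *ᵥ x) = (v ⬝ᵥ x) ^ 2 := by
      simp only [Matrix.mulVec, dotProduct, Matrix.vecMulVec_apply, sq, Finset.mul_sum,
        Finset.sum_mul]
      exact Finset.sum_congr rfl fun i _ => Finset.sum_congr rfl fun j _ => by ring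
    set u1 := s *ᵥ (A⁻¹ *ᵥ v) with hu1
    set u2 := s *ᵥ x with hu2
    have key12 : u1 ⬝ᵥ u2 = v ⬝ᵥ x := by
      rw [hu1, hu2, ← symm_dot hsherm, Matrix.mulVec_mulVec, hss, ← symm_dot hinvherm,
        Matrix.mulVec_mulVec, hAA, Matrix.one_mulVec]
    have key11 : u1 ⬝ᵥ u1 = v ⬝ᵥ A⁻¹ *ᵥ v := by
      rw [hu1, ← symm_dot hsherm, Matrix.mulVec_mulVec, hss, ← symm_dot hinvherm,
        Matrix.mulVec_mulVec, hAA, Matrix.one_mulVec]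
    have key22 : u2 ⬝ᵥ u2 = x ⬝ᵥ A *ᵥ x := by
      rw [hu2, ← symm_dot hsherm, Matrix.mulVec_mulVec, hss]
    have hcs : (u1 ⬝ᵥ u2) ^ 2 ≤ (u1 ⬝ᵥ u1) * (u2 ⬝ᵥ u2) := by
      have := Finset.sum_mul_sq_le_sq_mul_sq Finset.univ u1 u2
      simpa [dotProduct, sq] using this
    have hnn : 0 ≤ u2 ⬝ᵥ u2 := by
      simp only [dotProduct]
      exact Finset.sum_nonneg fun i _ => mul_self_nonneg _
    rw [houter, smul_mulVec, dotProduct_smul]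
    rw [key12, key11, key22] at hcs
    have hAx : 0 ≤ x ⬝ᵥ A *ᵥ x := by rw [← key22]; exact hnn
    rw [smul_eq_mul]
    nlinarith [hcs, hAx, mul_le_mul_of_nonneg_right h hAx]

lemma psd_smul {d : ℕ} {M : Matrix (Fin d) (Fin d) ℝ} (hM : M.PosSemidef) {c : ℝ}
    (hc : 0 ≤ c) : (c • M).PosSemidef := by
  rw [Matrix.posSemidef_iff_dotProduct_mulVec]
  constructor
  · show ((c • M)ᴴ = _)
    rw [Matrix.conjTranspose_smul, hM.1, star_trivial]
  · intro x
    rw [smul_mulVec, dotProduct_smul, smul_eq_mul]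
    exact mul_nonneg hc (by simpa using hM.dotProduct_mulVec_nonneg x)

/-- Nested good subsets with small difference: the uniform weightings are `ℓ₁`-close and
the covariances are Loewner-comparable. -/
theorem nested_good_subsets_weights_and_cov
    {d m : ℕ} (y : Fin m → Fin d → ℝ) (lam0 : ℝ) (hlam0 : 0 < lam0)
    (k : ℕ)
    (S₁ S₂ : Finset (Fin m)) (hsub : S₁ ⊆ S₂)
    (h₁ : IsGoodSubset y (Real.exp 2 * lam0) S₁)
    (h₂ : IsGoodSubset y (Real.exp 2 * lam0) S₂)
    (hcard : m ≤ S₁.card + k)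
    (hγ : Real.exp 2 * lam0 * ((k : ℝ) / m + 2 / m) < 1) :
    (∑ i, |(if i ∈ S₁ then (1 : ℝ) / m else 0) - (if i ∈ S₂ then (1 : ℝ) / m else 0)|
        ≤ (k : ℝ) / m) ∧
    (covOf m y S₁ -
        (1 - Real.exp 2 * lam0 * ((k : ℝ) / m + 2 / m)) • covOf m y S₂).PosSemidef := by
  set lam := Real.exp 2 * lam0 with hlam
  have hlampos : 0 < lam := mul_pos (Real.exp_pos 2) hlam0
  set T := S₂ \ S₁ with hT
  set t := T.card with ht
  -- t ≤ k
  have htk : t ≤ k := by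
    have h1 : T.card = S₂.card - S₁.card := Finset.card_sdiff_of_subset hsub
    have h2 : S₂.card ≤ m := by
      simpa using Finset.card_le_univ S₂
    omega
  have hminv : (0:ℝ) ≤ (m : ℝ)⁻¹ := by positivity
  constructor
  · -- ℓ₁ bound
    have habs : ∀ i : Fin m,
        |(if i ∈ S₁ then (1 : ℝ) / m else 0) - (if i ∈ S₂ then (1 : ℝ) / m else 0)|
          = if i ∈ T then (1 : ℝ) / m else 0 := by
      intro i
      by_cases h1 : i ∈ S₁
      · simp [hT, h1, hsub h1, Finset.mem_sdiff]
      · by_cases h2 : i ∈ S₂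
        · rw [if_neg h1, if_pos h2, if_pos (Finset.mem_sdiff.2 ⟨h2, h1⟩), zero_sub, abs_neg,
            abs_of_nonneg (by positivity)]
        · simp [hT, h1, h2, Finset.mem_sdiff]
    rw [Finset.sum_congr rfl fun i _ => habs i]
    rw [Finset.sum_ite_mem, Finset.univ_inter, Finset.sum_const, nsmul_eq_mul]
    calc (t : ℝ) * (1 / m) ≤ (k : ℝ) * (1 / m) := by
          apply mul_le_mul_of_nonneg_right _ (by positivity)
          exact_mod_cast htk
      _ = (k : ℝ) / m := by ring
  · -- Loewner comparison
    set Sig1 := covOf m y S₁ with hSig1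
    set Sig2 := covOf m y S₂ with hSig2
    have hdiff : (m : ℝ)⁻¹ • (∑ i ∈ T, Matrix.vecMulVec (y i) (y i)) = Sig2 - Sig1 := by
      have hd : (∑ i ∈ T, Matrix.vecMulVec (y i) (y i))
          = (∑ i ∈ S₂, Matrix.vecMulVec (y i) (y i))
            - (∑ i ∈ S₁, Matrix.vecMulVec (y i) (y i)) :=
        eq_sub_of_add_eq (Finset.sum_sdiff hsub)
      rw [hd, smul_sub]; rfl
    have hperm : ∀ i ∈ T, (lam • Sig2 - Matrix.vecMulVec (y i) (y i)).PosSemidef := by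
      intro i hi
      exact outer_le h₂.1 (y i) (h₂.2 i (Finset.mem_sdiff.1 hi).1)
    have hsumpsd : (∑ i ∈ T, (lam • Sig2 - Matrix.vecMulVec (y i) (y i))).PosSemidef :=
      Finset.sum_induction _ _ (fun a b ha hb => ha.add hb) Matrix.PosSemidef.zero hperm
    have hsum_eq : (∑ i ∈ T, (lam • Sig2 - Matrix.vecMulVec (y i) (y i)))
        = (t : ℝ) • (lam • Sig2) - ∑ i ∈ T, Matrix.vecMulVec (y i) (y i) := by
      rw [Finset.sum_sub_distrib, Finset.sum_const, ht, ← Nat.cast_smul_eq_nsmul ℝ]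
    rw [hsum_eq] at hsumpsd
    have P2 : ((m : ℝ)⁻¹ • ((t : ℝ) • (lam • Sig2)
        - ∑ i ∈ T, Matrix.vecMulVec (y i) (y i))).PosSemidef := psd_smul hsumpsd hminv
    have hcoeff : 0 ≤ lam * ((k : ℝ) / m + 2 / m) - lam * t / m := by
      have e1 : lam * (t : ℝ) * (m : ℝ)⁻¹ ≤ lam * (k : ℝ) * (m : ℝ)⁻¹ := by
        apply mul_le_mul_of_nonneg_right _ hminv
        exact mul_le_mul_of_nonneg_left (by exact_mod_cast htk) hlampos.le
      have e2 : (0:ℝ) ≤ lam * (2 / m) := by positivity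
      have expand : lam * ((k : ℝ) / m + 2 / m) - lam * (t : ℝ) / m
          = (lam * (k : ℝ) * (m : ℝ)⁻¹ - lam * (t : ℝ) * (m : ℝ)⁻¹) + lam * (2 / m) := by
        ring
      linarith [expand, e1, e2]
    have P1 : (((lam * ((k : ℝ) / m + 2 / m) - lam * t / m) • Sig2)).PosSemidef :=
      psd_smul h₂.1.posSemidef hcoeff
    have final_eq : Sig1 - (1 - lam * ((k : ℝ) / m + 2 / m)) • Sig2
        = ((lam * ((k : ℝ) / m + 2 / m) - lam * t / m) • Sig2)
          + ((m : ℝ)⁻¹ • ((t : ℝ) • (lam • Sig2) - ∑ i ∈ T, Matrix.vecMulVec (y i) (y i))) := by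
      rw [smul_sub, hdiff, smul_smul, smul_smul]
      module
    rw [final_eq]
    exact P1.add P2
end
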